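/- Let X and U be Banach spaces, p ∈ [1,∞) ∪ {∞}, and 𝒰 := L^p([0,∞),U) with ‖·‖_𝒰 = ‖·‖_{L^p}. Let (T_t)_{t≥0} be a C₀-semigroup on X and let Φ : [0,∞) × 𝒰 → X be such that each Φ_t : 𝒰 → X is linear, t ↦ Φ_t(u) is continuous for each u ∈ 𝒰, and φ(t,x₀,u) := T_t x₀ + Φ_t(u) defines a dynamical system with inputs 𝔖 := (X,𝒰,φ) (i.e., φ is cocyclic and causal). Then 𝔖 is weakly input-to-state stable if and only if 𝔖 is strongly input-to-state stable. -/

import Mathlib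

open MeasureTheory Filter Set Topology
open scoped ENNReal NNReal

noncomputable section

/-- The class `𝒦` of comparison functions: continuous, strictly increasing functions
`γ : [0,∞) → [0,∞)` with `γ 0 = 0` (modelled on `ℝ` via conditions on `Ici 0`). -/
def ClassK (γ : ℝ → ℝ) : Prop :=
  ContinuousOn γ (Ici 0) ∧ StrictMonoOn γ (Ici 0) ∧ γ 0 = 0 ∧ ∀ r : ℝ, 0 ≤ r → 0 ≤ γ r

/-- The class `𝒦 ∪ {0}`. -/
def ClassKZero (γ : ℝ → ℝ) : Prop := ClassK γ ∨ ∀ r : ℝ, γ r = 0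

/-- The class `ℒ` of comparison functions: continuous, strictly decreasing functions
`β : [0,∞) → [0,∞)` with `β r → 0` as `r → ∞`. -/
def ClassL (β : ℝ → ℝ) : Prop :=
  ContinuousOn β (Ici 0) ∧ StrictAntiOn β (Ici 0) ∧ (∀ r : ℝ, 0 ≤ r → 0 ≤ β r) ∧
    Tendsto β atTop (nhds 0)

/-- A (forward-complete) dynamical system with inputs `𝔖 = (X, 𝒰, φ)`. Inputs are
functions `u : ℝ → U` (only the values on `[0,∞)` matter), `inNorm` is the norm `‖·‖_𝒰`. -/
structure DynSysWithInputs (X : Type*) [NormedAddCommGroup X] (U : Type*) where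
  inputs : Set (ℝ → U)
  inputs_nonempty : inputs.Nonempty
  inNorm : (ℝ → U) → ℝ
  inNorm_nonneg : ∀ u ∈ inputs, 0 ≤ inNorm u
  flow : ℝ → X → (ℝ → U) → X
  shift_mem : ∀ u ∈ inputs, ∀ τ : ℝ, 0 ≤ τ → (fun s => u (s + τ)) ∈ inputs
  shift_norm_le : ∀ u ∈ inputs, ∀ τ : ℝ, 0 ≤ τ → inNorm (fun s => u (s + τ)) ≤ inNorm u
  concat_mem : ∀ u₁ ∈ inputs, ∀ u₂ ∈ inputs, ∀ τ : ℝ, 0 ≤ τ →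
    (fun s => if s < τ then u₁ s else u₂ (s - τ)) ∈ inputs
  flow_zero : ∀ (x₀ : X), ∀ u ∈ inputs, flow 0 x₀ u = x₀
  cocycle : ∀ (x₀ : X), ∀ u ∈ inputs, ∀ s t : ℝ, 0 ≤ s → 0 ≤ t →
    flow (t + s) x₀ u = flow t (flow s x₀ u) (fun r => u (r + s))
  flow_continuous : ∀ (x₀ : X), ∀ u ∈ inputs, ContinuousOn (fun t => flow t x₀ u) (Ici 0)
  causal : ∀ (x₀ : X), ∀ u₁ ∈ inputs, ∀ u₂ ∈ inputs, ∀ τ : ℝ, 0 ≤ τ →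
    (∀ s ∈ Icc (0:ℝ) τ, u₁ s = u₂ s) → ∀ t ∈ Icc (0:ℝ) τ, flow t x₀ u₁ = flow t x₀ u₂

variable {X U : Type*} [NormedAddCommGroup X]

/-- Uniform global stability with explicit gains `σ`, `γ`. -/
def UGSWith (S : DynSysWithInputs X U) (σ γ : ℝ → ℝ) : Prop :=
  ∀ (x₀ : X), ∀ u ∈ S.inputs, ∀ t : ℝ, 0 ≤ t →
    ‖S.flow t x₀ u‖ ≤ σ ‖x₀‖ + γ (S.inNorm u)

/-- Uniform global stability. -/
def UGS (S : DynSysWithInputs X U) : Prop :=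
  ∃ σ γ : ℝ → ℝ, ClassK σ ∧ ClassK γ ∧ UGSWith S σ γ

/-- The weak asymptotic gain property with gain `γ`. -/
def WeakAGWith (S : DynSysWithInputs X U) (γ : ℝ → ℝ) : Prop :=
  ∀ ε : ℝ, 0 < ε → ∀ (x₀ : X), ∀ u ∈ S.inputs, ∃ τ : ℝ, 0 ≤ τ ∧
    ∀ t : ℝ, τ ≤ t → ‖S.flow t x₀ u‖ ≤ ε + γ (S.inNorm u)

/-- The weak asymptotic gain property (for some gain in `𝒦 ∪ {0}`). -/
def WeakAG (S : DynSysWithInputs X U) : Prop :=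
  ∃ γ : ℝ → ℝ, ClassKZero γ ∧ WeakAGWith S γ

/-- The strong asymptotic gain property with gain `γ`. -/
def StrongAGWith (S : DynSysWithInputs X U) (γ : ℝ → ℝ) : Prop :=
  ∀ ε : ℝ, 0 < ε → ∀ (x₀ : X), ∃ τ : ℝ, 0 ≤ τ ∧
    ∀ t : ℝ, τ ≤ t → ∀ u ∈ S.inputs, ‖S.flow t x₀ u‖ ≤ ε + γ (S.inNorm u)

/-- The strong asymptotic gain property. -/
def StrongAG (S : DynSysWithInputs X U) : Prop :=
  ∃ γ : ℝ → ℝ, ClassKZero γ ∧ StrongAGWith S γ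

/-- The uniform asymptotic gain property with gain `γ`. -/
def UniformAGWith (S : DynSysWithInputs X U) (γ : ℝ → ℝ) : Prop :=
  ∀ ε : ℝ, 0 < ε → ∀ r : ℝ, 0 < r → ∃ τ : ℝ, 0 ≤ τ ∧
    ∀ t : ℝ, τ ≤ t → ∀ (x₀ : X), ‖x₀‖ ≤ r → ∀ u ∈ S.inputs,
      ‖S.flow t x₀ u‖ ≤ ε + γ (S.inNorm u)

/-- The uniform asymptotic gain property. -/
def UniformAG (S : DynSysWithInputs X U) : Prop :=
  ∃ γ : ℝ → ℝ, ClassKZero γ ∧ UniformAGWith S γ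

/-- The weak limit property with gain `γ`. -/
def WeakLimitWith (S : DynSysWithInputs X U) (γ : ℝ → ℝ) : Prop :=
  ∀ ε : ℝ, 0 < ε → ∀ (x₀ : X), ∀ u ∈ S.inputs, ∃ τ : ℝ, 0 ≤ τ ∧
    sInf ((fun t => ‖S.flow t x₀ u‖) '' Icc (0:ℝ) τ) ≤ ε + γ (S.inNorm u)

/-- The weak limit property. -/
def WeakLimit (S : DynSysWithInputs X U) : Prop :=
  ∃ γ : ℝ → ℝ, ClassK γ ∧ WeakLimitWith S γ

/-- Weak input-to-state stability. -/
def WeakISS (S : DynSysWithInputs X U) : Prop := UGS S ∧ WeakAG S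

/-- Strong input-to-state stability. -/
def StrongISS (S : DynSysWithInputs X U) : Prop := UGS S ∧ StrongAG S

/-- Uniform input-to-state stability. -/
def UniformISS (S : DynSysWithInputs X U) : Prop := UGS S ∧ UniformAG S

/-!
For a linear system the trajectory splits as `φ(t,x₀,u) = φ(t,x₀,0) + φ(t,0,u)`. Uniform global
stability bounds the input part by `γ(‖u‖_𝒰)` uniformly in `t`, while the weak asymptotic gain
property applied to the zero input makes the free part small after a time depending on `x₀` alone.
Hence the time in the asymptotic gain property can be chosen independently of `u`.
-/

theorem ClassK.map_zero {γ : ℝ → ℝ} (hγ : ClassK γ) : γ 0 = 0 := hγ.2.2.1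

theorem ClassKZero.map_zero {γ : ℝ → ℝ} (hγ : ClassKZero γ) : γ 0 = 0 :=
  hγ.elim ClassK.map_zero (· 0)

section

variable {S : DynSysWithInputs X U}

theorem StrongAGWith.weakAGWith {γ : ℝ → ℝ} (h : StrongAGWith S γ) : WeakAGWith S γ :=
  fun ε hε x₀ u hu =>
    let ⟨τ, hτ0, hτ⟩ := h ε hε x₀
    ⟨τ, hτ0, fun t ht => hτ t ht u hu⟩

theorem StrongISS.weakISS (h : StrongISS S) : WeakISS S :=
  ⟨h.1, h.2.imp fun _ ⟨hγ, hAG⟩ => ⟨hγ, StrongAGWith.weakAGWith hAG⟩⟩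

section Superposition

variable [Zero U] (h0 : (0 : ℝ → U) ∈ S.inputs) (hnorm0 : S.inNorm 0 = 0)
  (hsup : ∀ t, 0 ≤ t → ∀ x₀, ∀ u ∈ S.inputs, S.flow t x₀ u = S.flow t x₀ 0 + S.flow t 0 u)
include h0 hnorm0 hsup

theorem strongAGWith_of_superposition {σ γ γ' : ℝ → ℝ} (hσ : σ 0 = 0) (hUGS : UGSWith S σ γ)
    (hγ' : γ' 0 = 0) (hAG : WeakAGWith S γ') : StrongAGWith S γ := by
  intro ε hε x₀
  obtain ⟨τ, hτ0, hτ⟩ := hAG ε hε x₀ 0 h0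
  refine ⟨τ, hτ0, fun t ht u hu => ?_⟩
  have ht0 : 0 ≤ t := hτ0.trans ht
  have hfree : ‖S.flow t x₀ 0‖ ≤ ε := by simpa [hnorm0, hγ'] using hτ t ht
  have hforced : ‖S.flow t 0 u‖ ≤ γ (S.inNorm u) := by simpa [hσ] using hUGS 0 u hu t ht0
  calc ‖S.flow t x₀ u‖ = ‖S.flow t x₀ 0 + S.flow t 0 u‖ := by rw [hsup t ht0 x₀ u hu]
    _ ≤ ‖S.flow t x₀ 0‖ + ‖S.flow t 0 u‖ := norm_add_le _ _
    _ ≤ ε + γ (S.inNorm u) := add_le_add hfree hforced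

theorem weakISS_iff_strongISS_of_superposition : WeakISS S ↔ StrongISS S := by
  refine ⟨?_, StrongISS.weakISS⟩
  rintro ⟨⟨σ, γ, hσ, hγ, hUGS⟩, γ', hγ', hAG⟩
  exact ⟨⟨σ, γ, hσ, hγ, hUGS⟩, γ, Or.inl hγ,
    strongAGWith_of_superposition h0 hnorm0 hsup hσ.map_zero hUGS hγ'.map_zero hAG⟩

end Superposition

end

theorem linear_system_weakISS_iff_strongISS_general
    [NormedSpace ℝ X]
    [NormedAddCommGroup U] [NormedSpace ℝ U]
    (p : ℝ≥0∞)
    (T : ℝ → X →L[ℝ] X)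
    (Φ : ℝ → (ℝ → U) → X)
    (hΦsmul : ∀ t : ℝ, 0 ≤ t → ∀ (c : ℝ) (u : ℝ → U),
      MemLp u p (volume.restrict (Ici (0:ℝ))) → Φ t (c • u) = c • Φ t u)
    (S : DynSysWithInputs X U)
    (hS1 : S.inputs = {u : ℝ → U | MemLp u p (volume.restrict (Ici (0:ℝ)))})
    (hS2 : ∀ u : ℝ → U, S.inNorm u = (eLpNorm u p (volume.restrict (Ici (0:ℝ)))).toReal)
    (hS3 : ∀ (t : ℝ) (x₀ : X) (u : ℝ → U), S.flow t x₀ u = T t x₀ + Φ t u) :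
    WeakISS S ↔ StrongISS S := by
  have hΦ0 : ∀ t, 0 ≤ t → Φ t 0 = 0 := fun t ht => by
    simpa using hΦsmul t ht 0 0 MemLp.zero
  refine weakISS_iff_strongISS_of_superposition
    (by rw [hS1]; exact MemLp.zero) (by simp [hS2]) fun t ht x₀ u _ => ?_
  simp only [hS3, map_zero, hΦ0 t ht, add_zero, zero_add]

/-- **Proposition 4.3.** Let `X`, `U` be Banach spaces, `p ∈ [1,∞]`,
`𝒰 = L^p([0,∞),U)` with the `L^p`-norm, `(T_t)` a `C₀`-semigroup on `X`, and
`Φ : [0,∞) × 𝒰 → X` with each `Φ_t` linear and `t ↦ Φ_t(u)` continuous. If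
`φ(t,x₀,u) := T_t x₀ + Φ_t(u)` defines a dynamical system with inputs, then this system is
weakly input-to-state stable if and only if it is strongly input-to-state stable. -/
theorem linear_system_weakISS_iff_strongISS
    [NormedSpace ℝ X] [CompleteSpace X]
    [NormedAddCommGroup U] [NormedSpace ℝ U] [CompleteSpace U]
    (p : ℝ≥0∞) (hp : 1 ≤ p)
    (T : ℝ → X →L[ℝ] X)
    (hT0 : T 0 = ContinuousLinearMap.id ℝ X)
    (hTsem : ∀ s t : ℝ, 0 ≤ s → 0 ≤ t → T (t + s) = (T t).comp (T s))
    (hTcont : ∀ x : X, ContinuousOn (fun t => T t x) (Ici 0))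
    (Φ : ℝ → (ℝ → U) → X)
    (hΦadd : ∀ t : ℝ, 0 ≤ t → ∀ u v : ℝ → U,
      MemLp u p (volume.restrict (Ici (0:ℝ))) →
      MemLp v p (volume.restrict (Ici (0:ℝ))) →
      Φ t (u + v) = Φ t u + Φ t v)
    (hΦsmul : ∀ t : ℝ, 0 ≤ t → ∀ (c : ℝ) (u : ℝ → U),
      MemLp u p (volume.restrict (Ici (0:ℝ))) → Φ t (c • u) = c • Φ t u)
    (hΦcont : ∀ u : ℝ → U, MemLp u p (volume.restrict (Ici (0:ℝ))) →
      ContinuousOn (fun t => Φ t u) (Ici 0))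
    (S : DynSysWithInputs X U)
    (hS1 : S.inputs = {u : ℝ → U | MemLp u p (volume.restrict (Ici (0:ℝ)))})
    (hS2 : ∀ u : ℝ → U, S.inNorm u = (eLpNorm u p (volume.restrict (Ici (0:ℝ)))).toReal)
    (hS3 : ∀ (t : ℝ) (x₀ : X) (u : ℝ → U), S.flow t x₀ u = T t x₀ + Φ t u) :
    WeakISS S ↔ StrongISS S :=
  linear_system_weakISS_iff_strongISS_general p T Φ hΦsmul S hS1 hS2 hS3
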